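/- Let m ≥ 4 be even and let P_2 × P_m be the direct (tensor) product of the path P_2 with the path P_m (a graph of order 2m). Then the harmonic centralization of P_2 × P_m equals 4·( (m-2)·( H_{(m-2)/2} + 1/m ) - H_{m-1} - Σ_{j=2}^{(m-2)/2} ( H_{j-1} + H_{m-j} ) ) / ( (m-1)(2m-1) ), where H_n denotes the n-th harmonic number. -/

import Mathlib

open SimpleGraph Finset

/-- The harmonic centrality of a vertex `u` in a graph `G` of order `N`:
`(1/(N-1)) * Σ_{x ≠ u} 1/d(u,x)`, where `1/d(u,x) = 0` when there is no path
(Mathlib's `SimpleGraph.dist` is `0` for unreachable pairs, and `1/0 = 0` in `ℝ`). -/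
noncomputable def harmonicCentrality {V : Type*} [Fintype V] [DecidableEq V]
    (G : SimpleGraph V) (u : V) : ℝ :=
  (∑ x ∈ Finset.univ.erase u, (1 : ℝ) / (G.dist u x)) / ((Fintype.card V : ℝ) - 1)

/-- The harmonic centralization of a graph `G` of order `N`:
`(Σ_u (Hmax - H_G(u))) / ((N-2)/2)` where `Hmax` is the largest harmonic centrality. -/
noncomputable def harmonicCentralization {V : Type*} [Fintype V] [DecidableEq V]
    (G : SimpleGraph V) : ℝ :=
  (∑ u : V, ((⨆ v : V, harmonicCentrality G v) - harmonicCentrality G u)) /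
    (((Fintype.card V : ℝ) - 2) / 2)

/-- The fan graph `F_m`: the join of a hub vertex (`none`) with the path `P_m`. -/
def fanGraph (m : ℕ) : SimpleGraph (Option (Fin m)) :=
  SimpleGraph.fromRel (fun x y =>
    x = none ∨ ∃ a b : Fin m, x = some a ∧ y = some b ∧ (SimpleGraph.pathGraph m).Adj a b)

/-- The direct (tensor) product of two simple graphs. -/
def tensorProd {α β : Type*} (G : SimpleGraph α) (H : SimpleGraph β) :
    SimpleGraph (α × β) where
  Adj x y := G.Adj x.1 y.1 ∧ H.Adj x.2 y.2
  symm := ⟨fun x y h => ⟨h.1.symm, h.2.symm⟩⟩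
  loopless := ⟨fun x h => G.loopless.1 x.1 h.1⟩

variable {m : ℕ}

abbrev GG (m : ℕ) : SimpleGraph (Fin 2 × Fin m) :=
  tensorProd (SimpleGraph.pathGraph 2) (SimpleGraph.pathGraph m)

lemma GG_adj {x y : Fin 2 × Fin m} :
    (GG m).Adj x y ↔ x.1 ≠ y.1 ∧ (x.2.val + 1 = y.2.val ∨ y.2.val + 1 = x.2.val) := by
  show ((pathGraph 2).Adj x.1 y.1 ∧ _) ↔ _
  rw [pathGraph_two_eq_top, pathGraph_adj]
  simp [top_adj]

lemma GG_adj_par {x y : Fin 2 × Fin m} (h : (GG m).Adj x y) :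
    (x.1.val + x.2.val) % 2 = (y.1.val + y.2.val) % 2 := by
  rw [GG_adj] at h
  have h1 : x.1.val < 2 := x.1.isLt
  have h2 : y.1.val < 2 := y.1.isLt
  have h3 : x.1.val ≠ y.1.val := fun hv => h.1 (Fin.ext hv)
  omega

lemma GG_reachable_par {x y : Fin 2 × Fin m} (h : (GG m).Reachable x y) :
    (x.1.val + x.2.val) % 2 = (y.1.val + y.2.val) % 2 := by
  obtain ⟨w⟩ := h
  induction w with
  | nil => rfl
  | cons h' _ ih => rw [GG_adj_par h', ih]

lemma GG_walk_len {x y : Fin 2 × Fin m} (w : (GG m).Walk x y) :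
    ((x.2.val : ℤ) - y.2.val).natAbs ≤ w.length := by
  induction w with
  | nil => simp
  | @cons a b c h' w ih =>
    have := GG_adj.mp h'
    rw [Walk.length_cons]
    omega

lemma GG_exists_walk : ∀ (n : ℕ) (i i' : Fin 2) (a b : Fin m),
    (i.val + a.val) % 2 = (i'.val + b.val) % 2 →
    ((a.val : ℤ) - b.val).natAbs = n →
    ∃ w : (GG m).Walk (i, a) (i', b), w.length = n := by
  intro n
  induction n with
  | zero =>
    intro i i' a b hpar hd
    have hab : a = b := Fin.ext (by omega)
    have hii : i = i' := Fin.ext (by have := i.isLt; have := i'.isLt; omega)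
    subst hab; subst hii
    exact ⟨Walk.nil, rfl⟩
  | succ n ih =>
    intro i i' a b hpar hd
    have hi2 : i.val < 2 := i.isLt
    rcases lt_or_gt_of_ne (show a.val ≠ b.val by omega) with hlt | hgt
    · have ha' : a.val + 1 < m := lt_of_le_of_lt hlt b.isLt
      set a' : Fin m := ⟨a.val + 1, ha'⟩ with ha'def
      set j : Fin 2 := ⟨1 - i.val, by omega⟩ with hjdef
      have hadj : (GG m).Adj (i, a) (j, a') := by
        rw [GG_adj]
        refine ⟨fun hji => ?_, Or.inl rfl⟩
        have : i.val = 1 - i.val := congrArg Fin.val hji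
        omega
      obtain ⟨w, hw⟩ := ih j i' a' b (by simp only [hjdef, ha'def]; omega)
        (by simp only [ha'def]; omega)
      exact ⟨Walk.cons hadj w, by rw [Walk.length_cons, hw]⟩
    · have ha' : a.val - 1 < m := by omega
      set a' : Fin m := ⟨a.val - 1, ha'⟩ with ha'def
      set j : Fin 2 := ⟨1 - i.val, by omega⟩ with hjdef
      have hadj : (GG m).Adj (i, a) (j, a') := by
        rw [GG_adj]
        refine ⟨fun hji => ?_, Or.inr (by simp only [ha'def]; omega)⟩
        have : i.val = 1 - i.val := congrArg Fin.val hji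
        omega
      obtain ⟨w, hw⟩ := ih j i' a' b (by simp only [hjdef, ha'def]; omega)
        (by simp only [ha'def]; omega)
      exact ⟨Walk.cons hadj w, by rw [Walk.length_cons, hw]⟩

lemma GG_dist_eq {i i' : Fin 2} {a b : Fin m}
    (hpar : (i.val + a.val) % 2 = (i'.val + b.val) % 2) :
    (GG m).dist (i, a) (i', b) = ((a.val : ℤ) - b.val).natAbs := by
  obtain ⟨w, hw⟩ := GG_exists_walk _ i i' a b hpar rfl
  refine le_antisymm (hw ▸ SimpleGraph.dist_le w) ?_
  obtain ⟨w', hw'⟩ := SimpleGraph.Reachable.exists_walk_length_eq_dist ⟨w⟩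
  rw [← hw']
  exact GG_walk_len w'

lemma GG_dist_zero {i i' : Fin 2} {a b : Fin m}
    (hpar : (i.val + a.val) % 2 ≠ (i'.val + b.val) % 2) :
    (GG m).dist (i, a) (i', b) = 0 :=
  SimpleGraph.dist_eq_zero_of_not_reachable fun h => hpar (GG_reachable_par h)

noncomputable def realH (n : ℕ) : ℝ := ∑ i ∈ Finset.range n, (1 : ℝ) / (i + 1)

lemma realH_eq (n : ℕ) : realH n = (harmonic n : ℝ) := by
  rw [realH, harmonic]
  push_cast
  simp [one_div]

lemma realH_add (n k : ℕ) : realH (n + k) = realH n + ∑ i ∈ range k, (1 : ℝ) / (n + i + 1) := by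
  have h := Finset.sum_Ico_consecutive (fun i => (1:ℝ)/(i+1)) (Nat.zero_le n) (Nat.le_add_right n k)
  rw [Nat.Ico_zero_eq_range, Nat.Ico_zero_eq_range] at h
  have hk : n + k - n = k := by omega
  rw [realH, realH, ← h, Finset.sum_Ico_eq_sum_range, hk]
  congr 1
  apply Finset.sum_congr rfl
  intro x _
  push_cast
  ring

lemma realH_nonneg (n : ℕ) : 0 ≤ realH n := by
  apply Finset.sum_nonneg; intro i _; positivity

lemma sum_invdist {m : ℕ} (A : ℕ) (hA : A < m) :
    ∑ b ∈ range m, (1 : ℝ) / (((A : ℤ) - (b : ℕ)).natAbs) = realH A + realH (m - 1 - A) := by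
  rw [← Nat.Ico_zero_eq_range,
    ← Finset.sum_Ico_consecutive _ (Nat.zero_le (A + 1)) (by omega : A + 1 ≤ m),
    Nat.Ico_zero_eq_range]
  have h1 : ∑ b ∈ range (A + 1), (1 : ℝ) / (((A : ℤ) - (b : ℕ)).natAbs) = realH A := by
    rw [← Finset.sum_range_reflect, Finset.sum_range_succ']
    have e1 : ∀ k ∈ range A,
        (1 : ℝ) / (((A : ℤ) - ((A + 1 - 1 - (k + 1) : ℕ) : ℤ)).natAbs) = 1 / ((k : ℝ) + 1) := by
      intro k hk
      rw [mem_range] at hk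
      have h : ((A : ℤ) - ((A + 1 - 1 - (k + 1) : ℕ) : ℤ)).natAbs = k + 1 := by omega
      rw [h]; push_cast; ring
    rw [Finset.sum_congr rfl e1]
    have h0 : ((A : ℤ) - ((A + 1 - 1 - 0 : ℕ) : ℤ)).natAbs = 0 := by omega
    rw [h0, realH]
    norm_num
  have h2 : ∑ b ∈ Ico (A + 1) m, (1 : ℝ) / (((A : ℤ) - (b : ℕ)).natAbs) = realH (m - 1 - A) := by
    rw [Finset.sum_Ico_eq_sum_range]
    have e1 : ∀ k ∈ range (m - (A + 1)),
        (1 : ℝ) / (((A : ℤ) - ((A + 1 + k : ℕ) : ℤ)).natAbs) = 1 / ((k : ℝ) + 1) := by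
      intro k _
      have h : ((A : ℤ) - ((A + 1 + k : ℕ) : ℤ)).natAbs = k + 1 := by omega
      rw [h]; push_cast; ring
    have hc : m - (A + 1) = m - 1 - A := by omega
    rw [Finset.sum_congr rfl e1, hc, realH]
  rw [h1, h2]


lemma hc_val {m : ℕ} (i : Fin 2) (a : Fin m) :
    harmonicCentrality (GG m) (i, a)
      = (realH a.val + realH (m - 1 - a.val)) / (2 * (m : ℝ) - 1) := by
  rw [harmonicCentrality]
  have hcard : (Fintype.card (Fin 2 × Fin m) : ℝ) = 2 * m := by
    simp [Fintype.card_prod]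
  rw [hcard]
  congr 1
  rw [Finset.sum_erase _ (by simp [SimpleGraph.dist_self])]
  rw [Fintype.sum_prod_type_right]
  have hb : ∀ b : Fin m,
      ∑ i' : Fin 2, (1 : ℝ) / ((GG m).dist (i, a) (i', b))
        = 1 / (((a.val : ℤ) - (b.val : ℕ)).natAbs) := by
    intro b
    rw [Fin.sum_univ_two]
    by_cases hp : (i.val + a.val) % 2 = ((0 : Fin 2).val + b.val) % 2
    · rw [GG_dist_eq hp, GG_dist_zero (by simp only [Fin.val_zero] at hp; simp [Fin.val_one]; omega)]
      norm_num
    · rw [GG_dist_zero hp,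
        GG_dist_eq (by simp only [Fin.val_zero] at hp; simp [Fin.val_one]; omega)]
      norm_num
  calc ∑ b : Fin m, ∑ i' : Fin 2, (1 : ℝ) / ((GG m).dist (i, a) (i', b))
      = ∑ b : Fin m, (1 : ℝ) / (((a.val : ℤ) - (b.val : ℕ)).natAbs) :=
        Finset.sum_congr rfl fun b _ => hb b
    _ = ∑ b ∈ range m, (1 : ℝ) / (((a.val : ℤ) - (b : ℕ)).natAbs) :=
        Fin.sum_univ_eq_sum_range (fun n => (1:ℝ)/(((a.val:ℤ) - (n:ℤ)).natAbs)) m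
    _ = realH a.val + realH (m - 1 - a.val) := sum_invdist a.val a.isLt

lemma realH_le_aux {t a : ℕ} (ha : a ≤ t - 1) (ht : 1 ≤ t) :
    realH a + realH (2 * t - 1 - a) ≤ realH (t - 1) + realH t := by
  set k := t - 1 - a with hk
  have h1 : t - 1 = a + k := by omega
  have h2 : 2 * t - 1 - a = t + k := by omega
  rw [h1, h2, realH_add a k, realH_add t k]
  have hsum : ∑ i ∈ range k, (1 : ℝ) / (t + i + 1) ≤ ∑ i ∈ range k, (1 : ℝ) / (a + i + 1) := by
    apply Finset.sum_le_sum
    intro i _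
    apply one_div_le_one_div_of_le
    · positivity
    · have hc : (a : ℝ) ≤ (t : ℝ) := Nat.cast_le.mpr (by omega)
      linarith
  linarith

lemma realH_max {t a : ℕ} (ht : 1 ≤ t) (ha : a < 2 * t) :
    realH a + realH (2 * t - 1 - a) ≤ realH (t - 1) + realH t := by
  rcases le_or_gt a (t - 1) with h | h
  · exact realH_le_aux h ht
  · have h1 : 2 * t - 1 - a ≤ t - 1 := by omega
    have h2 : 2 * t - 1 - (2 * t - 1 - a) = a := by omega
    have := realH_le_aux h1 ht
    rw [h2] at this
    linarith

lemma sumIcc1 (s : ℕ) :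
    ∑ j ∈ Finset.Icc 2 (s + 1), realH (j - 1) = ∑ a ∈ range (s + 1), realH a := by
  rw [← Finset.Ico_add_one_right_eq_Icc, Finset.sum_Ico_eq_sum_range]
  have h1 : s + 1 + 1 - 2 = s := by omega
  rw [h1, Finset.sum_range_succ']
  have : ∀ k ∈ range s, realH (2 + k - 1) = realH (k + 1) := by
    intro k _; congr 1; omega
  rw [Finset.sum_congr rfl this]
  simp [realH]

lemma sumIcc2 (s : ℕ) :
    ∑ j ∈ Finset.Icc 2 (s + 1), realH (2 * s + 4 - j)
      = ∑ a ∈ Finset.Ico (s + 3) (2 * s + 3), realH a := by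
  rw [← Finset.Ico_add_one_right_eq_Icc, Finset.sum_Ico_eq_sum_range, Finset.sum_Ico_eq_sum_range]
  have h1 : s + 1 + 1 - 2 = s := by omega
  have h2 : 2 * s + 3 - (s + 3) = s := by omega
  rw [h1, h2, ← Finset.sum_range_reflect (fun k => realH (s + 3 + k)) s]
  apply Finset.sum_congr rfl
  intro k hk
  rw [mem_range] at hk
  congr 1
  omega

lemma bigsplit (s : ℕ) :
    ∑ a ∈ range (2 * s + 4), realH a
      = ∑ a ∈ range (s + 1), realH a + realH (s + 1) + realH (s + 2)
        + ∑ a ∈ Finset.Ico (s + 3) (2 * s + 3), realH a + realH (2 * s + 3) := by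
  rw [show 2 * s + 4 = (2 * s + 3) + 1 by ring, Finset.sum_range_succ]
  rw [← Nat.Ico_zero_eq_range,
    ← Finset.sum_Ico_consecutive _ (Nat.zero_le (s + 3)) (by omega : s + 3 ≤ 2 * s + 3),
    Nat.Ico_zero_eq_range]
  rw [show s + 3 = (s + 2) + 1 by ring, Finset.sum_range_succ, Finset.sum_range_succ]


lemma sup_val {m t : ℕ} (ht : 1 ≤ t) (hmt : m = 2 * t) :
    (⨆ v : Fin 2 × Fin m, harmonicCentrality (GG m) v)
      = (realH (t - 1) + realH t) / (2 * (m : ℝ) - 1) := by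
  subst hmt
  have hden : (0 : ℝ) < 2 * ((2 * t : ℕ) : ℝ) - 1 := by
    have : (1 : ℝ) ≤ (t : ℝ) := by exact_mod_cast ht
    push_cast
    linarith
  haveI : Nonempty (Fin 2 × Fin (2 * t)) := ⟨(0, ⟨0, by omega⟩)⟩
  apply le_antisymm
  · apply ciSup_le
    rintro ⟨i, a⟩
    rw [hc_val]
    exact (div_le_div_iff_of_pos_right hden).mpr (realH_max ht a.isLt)
  · have hle := le_ciSup (f := fun v => harmonicCentrality (GG (2 * t)) v)
      (Set.Finite.bddAbove (Set.finite_range _)) (⟨0, ⟨t - 1, by omega⟩⟩ : Fin 2 × Fin (2 * t))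
    rw [hc_val] at hle
    have h2 : 2 * t - 1 - ((⟨t - 1, by omega⟩ : Fin (2 * t)) : ℕ) = t := by simp; omega
    rw [h2] at hle
    exact hle

lemma sum_hc {m : ℕ} : ∑ u : Fin 2 × Fin m, harmonicCentrality (GG m) u
    = 4 * (∑ a ∈ range m, realH a) / (2 * (m : ℝ) - 1) := by
  rw [Fintype.sum_prod_type_right]
  have h1 : ∀ b : Fin m, ∑ i : Fin 2, harmonicCentrality (GG m) (i, b)
      = 2 * ((realH b.val + realH (m - 1 - b.val)) / (2 * (m : ℝ) - 1)) := by
    intro b; rw [Fin.sum_univ_two, hc_val, hc_val]; ring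
  rw [Finset.sum_congr rfl (fun b _ => h1 b)]
  have h2 : ∑ b : Fin m, (realH b.val + realH (m - 1 - b.val))
      = 2 * ∑ a ∈ range m, realH a := by
    rw [Fin.sum_univ_eq_sum_range (fun n => realH n + realH (m - 1 - n)) m,
      Finset.sum_add_distrib, Finset.sum_range_reflect (fun a => realH a) m]
    ring
  rw [← Finset.mul_sum, ← Finset.sum_div, h2]
  ring


/-- Theorem 3.10 (even case): harmonic centralization of `P₂ × Pₘ` for even `m`. -/
theorem harmonicCentralization_tensorProd_path_path_even (m : ℕ) (hm : 4 ≤ m) (heven : Even m) :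
    harmonicCentralization (tensorProd (SimpleGraph.pathGraph 2) (SimpleGraph.pathGraph m)) =
      4 * (((m : ℝ) - 2) * ((harmonic ((m - 2) / 2) : ℝ) + 1 / (m : ℝ))
          - (harmonic (m - 1) : ℝ)
          - ∑ j ∈ Finset.Icc 2 ((m - 2) / 2),
              ((harmonic (j - 1) : ℝ) + (harmonic (m - j) : ℝ))) /
        (((m : ℝ) - 1) * (2 * (m : ℝ) - 1)) := by
  obtain ⟨k, hk⟩ := heven
  obtain ⟨s, rfl⟩ : ∃ s, m = 2 * s + 4 := ⟨k - 2, by omega⟩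
  show harmonicCentralization (GG (2 * s + 4)) = _
  have hcard : Fintype.card (Fin 2 × Fin (2 * s + 4)) = 2 * (2 * s + 4) := by simp
  rw [harmonicCentralization, Finset.sum_sub_distrib, Finset.sum_const, Finset.card_univ, hcard,
    sup_val (t := s + 2) (by omega) (by ring), sum_hc]
  have e0 : s + 2 - 1 = s + 1 := by omega
  rw [e0]
  have hX : realH (s + 2) = realH (s + 1) + 1 / ((s : ℝ) + 2) := by
    rw [show s + 2 = (s + 1) + 1 by ring, realH_add, Finset.sum_range_one]
    push_cast
    ring
  rw [bigsplit s, hX]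
  have e1 : (2 * s + 4 - 2) / 2 = s + 1 := by omega
  have e2 : 2 * s + 4 - 1 = 2 * s + 3 := by omega
  rw [e1, e2, ← realH_eq, ← realH_eq]
  have e3 : ∑ j ∈ Finset.Icc 2 (s + 1), ((harmonic (j - 1) : ℝ) + (harmonic (2 * s + 4 - j) : ℝ))
      = ∑ j ∈ Finset.Icc 2 (s + 1), (realH (j - 1) + realH (2 * s + 4 - j)) :=
    Finset.sum_congr rfl fun j _ => by rw [realH_eq, realH_eq]
  rw [e3, Finset.sum_add_distrib, sumIcc1 s, sumIcc2 s]
  set A := ∑ a ∈ range (s + 1), realH a with hA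
  set B := ∑ a ∈ Finset.Ico (s + 3) (2 * s + 3), realH a with hB
  set X := realH (s + 1) with hXdef
  set Y := realH (2 * s + 3) with hY
  have hc0 : (0 : ℝ) ≤ (s : ℝ) := Nat.cast_nonneg s
  have h1 : (4 : ℝ) * s + 7 ≠ 0 := by linarith
  have h2 : (4 : ℝ) * s + 6 ≠ 0 := by linarith
  have h3 : (2 : ℝ) * s + 3 ≠ 0 := by linarith
  have h4 : (s : ℝ) + 2 ≠ 0 := by linarith
  have h5 : (2 : ℝ) * s + 4 ≠ 0 := by linarith
  rw [nsmul_eq_mul]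
  push_cast
  have h6 : (2 : ℝ) * (2 * s + 4) - 1 ≠ 0 := by linarith
  have h7 : (2 : ℝ) * s + 4 - 1 ≠ 0 := by linarith
  have h8 : (2 : ℝ) * (2 * s + 4) - 2 ≠ 0 := by linarith
  field_simp
  ring
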